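/- arXiv:1406.5147 — 3 statements merged into one kernel-verified Lean document; each statement's English description precedes it below -/
import Mathlib

section
/- Let G be a planar ribbon graph, let u be a vertex of G, and let e_0, …, e_k be consecutive outgoing edges from u in the cyclic order at u. For i = 0, …, k, let r_i be the face of G (equivalently, the vertex of G*) lying to the right of e_i with respect to the cyclic order at u. Then φ(∠^u(e_0, e_k)) = [r_0 − r_k] in Jac(G*). -/
attribute [local instance 10] Classical.propDecidable

/-- A finite multigraph, presented by darts (oriented edges): `rev` is the
fixed-point-free involution exchanging the two darts of each edge, and
`head d` is the vertex the dart `d` points to. -/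
structure Multigraph where
  V : Type
  D : Type
  fV : Fintype V
  dV : DecidableEq V
  fD : Fintype D
  dD : DecidableEq D
  rev : D → D
  rev_invol : Function.Involutive rev
  rev_ne : ∀ d : D, rev d ≠ d
  head : D → V

attribute [instance] Multigraph.fV Multigraph.dV Multigraph.fD Multigraph.dD

namespace Multigraph

variable (G : Multigraph)

/-- The tail (starting vertex) of a dart. -/
def tail (d : G.D) : G.V := G.head (G.rev d)

/-- `G` is loopless: no edge has equal endpoints. -/
def Loopless : Prop := ∀ d : G.D, G.head d ≠ G.tail d

/-- One-step adjacency between vertices. -/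
def Adj (u v : G.V) : Prop := ∃ d : G.D, G.tail d = u ∧ G.head d = v

/-- `G` is connected. -/
def Connected : Prop := ∀ u v : G.V, Relation.ReflTransGen G.Adj u v

/-- The degree of a vertex: the number of darts with tail `v`. -/
def degree (v : G.V) : ℕ := (Finset.univ.filter fun d : G.D => G.tail d = v).card

/-- The number of edges joining `v` to `w`. -/
def mul (v w : G.V) : ℕ :=
  (Finset.univ.filter fun d : G.D => G.tail d = v ∧ G.head d = w).card

/-! ### Divisors and the sandpile group -/

/-- The total degree homomorphism on divisors. -/
def degHom : (G.V → ℤ) →+ ℤ where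
  toFun x := ∑ v, x v
  map_zero' := by simp
  map_add' x y := by simp [Finset.sum_add_distrib]

/-- Degree-zero divisors. -/
def Div0 : AddSubgroup (G.V → ℤ) := G.degHom.ker

/-- The principal divisor of a lending move at `v`: `v` loses `deg v` chips and
each other vertex `w` gains `n(v,w)` chips. -/
def prin (v : G.V) : G.V → ℤ :=
  fun w => if w = v then -(G.degree v : ℤ) else (G.mul v w : ℤ)

/-- The subgroup of `ℤV` generated by all lending moves. -/
def Prin : AddSubgroup (G.V → ℤ) := AddSubgroup.closure (Set.range G.prin)

/-- Two divisors are linearly equivalent when they differ by a sequence of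
lending moves. -/
def LinEquiv (D D' : G.V → ℤ) : Prop := D' - D ∈ G.Prin

/-- The sandpile group (Jacobian) of `G`: degree-zero divisors modulo
linear equivalence. -/
def Jac := G.Div0 ⧸ (G.Prin.addSubgroupOf G.Div0)

instance : AddCommGroup G.Jac :=
  inferInstanceAs (AddCommGroup (G.Div0 ⧸ (G.Prin.addSubgroupOf G.Div0)))

/-- The divisor class of a degree-zero divisor in the sandpile group. -/
def divClass (D : G.Div0) : G.Jac := QuotientAddGroup.mk D

/-- The divisor `a - b` for vertices `a`, `b`. -/
def unitDivFun (a b : G.V) : G.V → ℤ :=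
  fun w => (if w = a then 1 else 0) - (if w = b then 1 else 0)

lemma unitDivFun_mem (a b : G.V) : G.unitDivFun a b ∈ G.Div0 := by
  simp [Div0, degHom, AddMonoidHom.mem_ker, unitDivFun, Finset.sum_sub_distrib]

/-- The divisor `a - b` as a degree-zero divisor. -/
def unitDiv (a b : G.V) : G.Div0 := ⟨G.unitDivFun a b, G.unitDivFun_mem a b⟩

/-- The class `[a - b] ∈ Jac(G)`. -/
def unitClass (a b : G.V) : G.Jac := G.divClass (G.unitDiv a b)

/-- The boundary of a dart: `∂ d = [d⁺ - d⁻] ∈ Jac(G)`. -/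
def dartBoundary (d : G.D) : G.Jac := G.unitClass (G.head d) (G.tail d)

/-! ### The group ℤE of formal sums of oriented edges -/

/-- `ℤE`: functions on darts that are antisymmetric under reversal;
this is the free abelian group on the oriented edges, with `-e` identified
with the oppositely oriented edge. -/
def EdgeGroup : AddSubgroup (G.D → ℤ) where
  carrier := {x | ∀ d, x (G.rev d) = -x d}
  add_mem' := by
    intro a b ha hb d
    simp only [Pi.add_apply, ha d, hb d]
    ring
  zero_mem' := by intro d; simp
  neg_mem' := by
    intro a ha d
    simp only [Pi.neg_apply, ha d]

/-- The element of `ℤE` corresponding to a single oriented edge (dart). -/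
def dartVec (d : G.D) : G.D → ℤ :=
  fun d' => if d' = d then 1 else if d' = G.rev d then -1 else 0

lemma dartVec_mem (d : G.D) : G.dartVec d ∈ G.EdgeGroup := by
  have hinj := G.rev_invol.injective
  intro d'
  unfold dartVec
  rcases eq_or_ne d' d with rfl | h1
  · simp [G.rev_ne d']
  · rcases eq_or_ne d' (G.rev d) with rfl | h2
    · simp [G.rev_invol d, G.rev_ne d]
    · have h3 : G.rev d' ≠ d := fun h => h2 (by rw [← h, G.rev_invol])
      have h4 : G.rev d' ≠ G.rev d := fun h => h1 (hinj h)
      simp [h1, h2, h3, h4]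

/-- The vector of a list of darts (e.g. of a directed cycle). -/
def listVec (l : List G.D) : G.D → ℤ := (l.map G.dartVec).sum

/-- `l` is a directed cycle: a nonempty closed walk of darts through
pairwise distinct vertices. -/
def IsDirCycle (l : List G.D) : Prop :=
  l ≠ [] ∧ l.Chain' (fun a b => G.head a = G.tail b) ∧
    (∀ a ∈ l.getLast?, ∀ b ∈ l.head?, G.head a = G.tail b) ∧
    (l.map G.tail).Nodup

/-- The integral cycle space `𝒞 ⊆ ℤE`. -/
def CycleSpace : AddSubgroup (G.D → ℤ) :=
  AddSubgroup.closure {x | ∃ l : List G.D, G.IsDirCycle l ∧ x = G.listVec l}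

/-- The cut determined by a set `U` of vertices, directed out of `U`. -/
def cutVec (U : Finset G.V) : G.D → ℤ := fun d =>
  if G.tail d ∈ U ∧ G.head d ∉ U then 1
  else if G.head d ∈ U ∧ G.tail d ∉ U then -1 else 0

/-- The integral cut space `𝒞* ⊆ ℤE`. -/
def CutSpace : AddSubgroup (G.D → ℤ) :=
  AddSubgroup.closure (Set.range G.cutVec)

/-- `ℰ(G) = ℤE / (𝒞 + 𝒞*)`. -/
def EGroup :=
  G.EdgeGroup ⧸ ((G.CycleSpace ⊔ G.CutSpace).addSubgroupOf G.EdgeGroup)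

instance : AddCommGroup G.EGroup :=
  inferInstanceAs
    (AddCommGroup (G.EdgeGroup ⧸ ((G.CycleSpace ⊔ G.CutSpace).addSubgroupOf G.EdgeGroup)))

/-- The class of an oriented edge in `ℰ(G)`. -/
def eClass (d : G.D) : G.EGroup :=
  QuotientAddGroup.mk ⟨G.dartVec d, G.dartVec_mem d⟩

/-- The boundary map `ℤE → ℤV`, sending an oriented edge `e` to `e⁺ - e⁻`
(when restricted to `ℤE ⊆ (D → ℤ)`). -/
def bMap : (G.D → ℤ) →+ (G.V → ℤ) where
  toFun x := fun v => ∑ d ∈ Finset.univ.filter (fun d => G.head d = v), x d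
  map_zero' := by funext v; simp
  map_add' x y := by funext v; simp [Finset.sum_add_distrib]

/-! ### Spanning trees -/

/-- Adjacency using only darts in `T`. -/
def treeAdj (T : Finset G.D) (u v : G.V) : Prop :=
  ∃ d ∈ T, G.tail d = u ∧ G.head d = v

/-- `T` (a reversal-closed set of darts) is a spanning tree: it is connected,
meets every vertex, and has exactly `|V| - 1` edges (hence is acyclic). -/
def IsSpanningTree (T : Finset G.D) : Prop :=
  (∀ d ∈ T, G.rev d ∈ T) ∧
    (∀ u v : G.V, Relation.ReflTransGen (G.treeAdj T) u v) ∧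
    T.card = 2 * (Fintype.card G.V - 1)

/-- The reversal involution as a permutation of darts. -/
def revPerm : Equiv.Perm G.D := Function.Involutive.toPerm G.rev G.rev_invol

end Multigraph

/-- A ribbon graph: a multigraph together with, at each vertex, a cyclic
ordering of the incident edges (darts).  `next d` is the dart following `d`
in the cyclic order at the tail of `d`. -/
structure RibbonGraph extends Multigraph where
  next : Equiv.Perm toMultigraph.D
  next_tail : ∀ d : toMultigraph.D, toMultigraph.tail (next d) = toMultigraph.tail d
  next_cyclic : ∀ d d' : toMultigraph.D,
    toMultigraph.tail d = toMultigraph.tail d' → next.SameCycle d d'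

namespace RibbonGraph

variable (G : RibbonGraph)

/-- The face permutation of a ribbon graph; its orbits are the faces of the
associated surface embedding (the orbit of a dart `d` is the face to the left
of `d`, when the cyclic orders are taken clockwise). -/
def facePerm : Equiv.Perm G.D := G.next * G.revPerm

/-- Darts lie in the same face when they are in the same orbit of the face
permutation. -/
def faceSetoid : Setoid G.D :=
  ⟨G.facePerm.SameCycle,
    ⟨fun x => Equiv.Perm.SameCycle.refl _ x, fun h => h.symm, fun h h' => h.trans h'⟩⟩

/-- The faces of the surface embedding determined by the ribbon structure. -/
def Faces := Quotient G.faceSetoid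

instance : Fintype G.Faces :=
  @Quotient.fintype _ _ G.faceSetoid
    (fun a b => inferInstanceAs (Decidable (G.facePerm.SameCycle a b)))

/-- The face to the left of a dart. -/
def leftFace (d : G.D) : G.Faces := Quotient.mk G.faceSetoid d

/-- The face to the right of a dart. -/
def rightFace (d : G.D) : G.Faces := G.leftFace (G.rev d)

/-- `G` is a planar ribbon graph: the surface it embeds in has genus `0`,
i.e. Euler's formula `|V| - |E| + |F| = 2` holds. -/
def IsPlanar : Prop :=
  Fintype.card G.V + Fintype.card G.Faces = Fintype.card G.D / 2 + 2

/-! ### Rotor-routing -/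

/-- A rotor configuration with basepoint `q`: a choice, for each vertex
`v ≠ q`, of a dart with tail `v`. -/
def RotorConfig (q : G.V) :=
  {ρ : (v : G.V) → v ≠ q → G.D // ∀ (v : G.V) (h : v ≠ q), G.tail (ρ v h) = v}

/-- Firing the vertex `v ≠ q` in a state (chip configuration, rotor
configuration): the rotor at `v` advances to the next dart in the cyclic
order at `v`, and one chip moves from `v` to the head of the new rotor. -/
def fire (q : G.V) (v : G.V) (hv : v ≠ q) (s : (G.V → ℤ) × G.RotorConfig q) :
    (G.V → ℤ) × G.RotorConfig q :=
  ((fun w => s.1 w - (if w = v then 1 else 0) +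
      (if w = G.head (G.next (s.2.1 v hv)) then 1 else 0)),
   ⟨fun u hu => if u = v then G.next (s.2.1 v hv) else s.2.1 u hu, by
      intro u hu
      by_cases h : u = v
      · simp only [if_pos h]
        rw [G.next_tail, s.2.2 v hv, h]
      · simp only [if_neg h]
        exact s.2.2 u hu⟩)

/-- A single legal rotor-routing step: fire some vertex `v ≠ q` carrying at
least one chip. -/
def Step (q : G.V) (s s' : (G.V → ℤ) × G.RotorConfig q) : Prop :=
  ∃ (v : G.V) (hv : v ≠ q), 1 ≤ s.1 v ∧ s' = G.fire q v hv s

/-- A state is terminal when no vertex other than `q` can be fired. -/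
def Terminal (q : G.V) (s : (G.V → ℤ) × G.RotorConfig q) : Prop :=
  ∀ v : G.V, v ≠ q → s.1 v ≤ 0

/-- `ρ` is the rotor configuration obtained by orienting the spanning tree
`T` towards the root `q`: every rotor is a dart of `T`, and following the
rotors from any vertex leads to `q`. -/
def TowardRoot (q : G.V) (T : Finset G.D) (ρ : G.RotorConfig q) : Prop :=
  ∀ (v : G.V) (h : v ≠ q), ρ.1 v h ∈ T ∧
    Relation.ReflTransGen (fun a b => ∃ ha : a ≠ q, G.head (ρ.1 a ha) = b) v q

/-- The rotor-routing process started from a representative of `x` that is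
nonnegative away from `q` and from the rotor configuration of `T` oriented
towards `q` terminates at the rotor configuration of `T'` oriented towards
`q`. -/
def ActsTo (q : G.V) (x : G.Jac) (T T' : Finset G.D) : Prop :=
  ∃ D : G.Div0, G.divClass D = x ∧ (∀ v : G.V, v ≠ q → 0 ≤ (D : G.V → ℤ) v) ∧
    ∃ (ρ ρ' : G.RotorConfig q) (c' : G.V → ℤ),
      G.TowardRoot q T ρ ∧ G.TowardRoot q T' ρ' ∧
      Relation.ReflTransGen (G.Step q) ((D : G.V → ℤ), ρ) (c', ρ') ∧
      G.Terminal q (c', ρ')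

/-- The rotor-routing action of the sandpile group element `x` on the
spanning tree `T`, with basepoint `q`. -/
noncomputable def rotorAction (q : G.V) (x : G.Jac) (T : Finset G.D) :
    Finset G.D :=
  if h : ∃ T' : Finset G.D, G.IsSpanningTree T' ∧ G.ActsTo q x T T' then
    h.choose
  else T

/-! ### Angles -/

/-- The angle `∠ᵘ(d, d')` between two darts with the same tail `u`:
if `d = e₀, e₁, …, e_k = d'` are the consecutive darts in the cyclic order
at `u`, the angle is `∑_{i=1}^{k} ∂ eᵢ ∈ Jac(G)`. -/
noncomputable def dartAngle (d d' : G.D) : G.Jac :=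
  if h : ∃ k : ℕ, (⇑G.next)^[k] d = d' then
    ∑ i ∈ Finset.range (Nat.find h), G.dartBoundary ((⇑G.next)^[i + 1] d)
  else 0

/-- The angle `∠_v(T, T')` between two spanning trees `T, T'` based at `v`:
the sum over all vertices `u ≠ v` of the angles between the rotors of `T`
and of `T'` at `u` (both oriented towards `v`). -/
noncomputable def treeAngle (v : G.V) (T T' : Finset G.D) : G.Jac :=
  if h : ∃ p : G.RotorConfig v × G.RotorConfig v,
      G.TowardRoot v T p.1 ∧ G.TowardRoot v T' p.2 then
    ∑ u : G.V,
      if hu : u = v then 0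
      else G.dartAngle (h.choose.1.1 u hu) (h.choose.2.1 u hu)
  else 0


/-! ### The planar dual ribbon graph -/

/-- The dual ribbon graph `G*` of a ribbon graph `G`: its vertices are the
faces of `G`, its darts are the darts of `G`, where the dart `d`, viewed in
the dual, crosses `d` from the face after `d` (its right, its dual tail) to
the face before `d` (its left, its dual head), and the cyclic orders at the
faces are the counter-clockwise ones. -/
noncomputable def dual : RibbonGraph where
  V := G.Faces
  D := G.D
  fV := inferInstance
  dV := Classical.decEq _
  fD := G.fD
  dD := G.dD
  rev := G.rev
  rev_invol := G.rev_invol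
  rev_ne := G.rev_ne
  head := fun d => G.leftFace d
  next := G.revPerm * G.facePerm * G.revPerm
  next_tail := by
    intro d
    show G.leftFace (G.rev (G.rev (G.facePerm (G.rev d)))) = G.leftFace (G.rev d)
    rw [G.rev_invol]
    exact Quotient.sound ⟨-1, by simp⟩
  next_cyclic := by
    intro d d' h
    have h1 : G.facePerm.SameCycle (G.rev d) (G.rev d') := Quotient.exact h
    have h2 := h1.conj (g := G.revPerm)
    have hR : G.revPerm⁻¹ = G.revPerm := by
      rw [Equiv.Perm.inv_def]
      exact Function.Involutive.toPerm_symm G.rev_invol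
    rw [hR] at h2
    have e1 : G.revPerm (G.rev d) = d := G.rev_invol d
    have e2 : G.revPerm (G.rev d') = d' := G.rev_invol d'
    rw [e1, e2] at h2
    exact h2


end RibbonGraph

namespace Multigraph

variable (G : Multigraph)

theorem unitClass_self (a : G.V) : G.unitClass a a = 0 := by
  have h : G.unitDiv a a = 0 := by
    ext w
    simp [unitDiv, unitDivFun]
  rw [unitClass, divClass, h]
  rfl

theorem unitClass_add_unitClass (a b c : G.V) :
    G.unitClass a b + G.unitClass b c = G.unitClass a c := by
  have h : G.unitDiv a b + G.unitDiv b c = G.unitDiv a c := by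
    ext w
    simp [unitDiv, unitDivFun]
  rw [unitClass, unitClass, unitClass, divClass, divClass, divClass, ← h]
  rfl

end Multigraph

namespace RibbonGraph

variable (G : RibbonGraph)

theorem leftFace_next (d : G.D) : G.leftFace (G.next d) = G.rightFace d := by
  refine (Quotient.sound (s := G.faceSetoid) ⟨1, ?_⟩).symm
  show G.next (G.rev (G.rev d)) = G.next d
  rw [G.rev_invol d]

theorem dual_dartBoundary (d : G.D) :
    G.dual.dartBoundary d = G.dual.unitClass (G.leftFace d) (G.rightFace d) :=
  rfl

/-- The dual of `next^[i+1] e` runs from the face right of `next^[i] e` to the face right of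
`next^[i+1] e`, so the sum telescopes. -/
theorem sum_dual_dartBoundary_iterate_next (e : G.D) (n : ℕ) :
    ∑ i ∈ Finset.range n, G.dual.dartBoundary ((⇑G.next)^[i + 1] e) =
      G.dual.unitClass (G.rightFace e) (G.rightFace ((⇑G.next)^[n] e)) := by
  induction n with
  | zero => exact (G.dual.unitClass_self _).symm
  | succ n ih =>
    rw [Finset.sum_range_succ, ih, dual_dartBoundary, Function.iterate_succ_apply',
      leftFace_next]
    exact G.dual.unitClass_add_unitClass _ _ _

theorem dartAngle_eq_sum {d d' : G.D} (h : ∃ k : ℕ, (⇑G.next)^[k] d = d') :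
    ∃ n : ℕ, (⇑G.next)^[n] d = d' ∧
      G.dartAngle d d' = ∑ i ∈ Finset.range n, G.dartBoundary ((⇑G.next)^[i + 1] d) :=
  ⟨Nat.find h, Nat.find_spec h, dif_pos h⟩

end RibbonGraph

theorem dual_of_dart_angle_general (G : RibbonGraph)
    (φ : G.Jac ≃+ G.dual.Jac)
    (hφ : ∀ d : G.D, φ (G.dartBoundary d) = G.dual.dartBoundary d)
    (k : ℕ) (e : G.D) :
    φ (G.dartAngle e ((⇑G.next)^[k] e)) =
      G.dual.unitClass (G.rightFace e) (G.rightFace ((⇑G.next)^[k] e)) := by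
  obtain ⟨n, hn, hangle⟩ := G.dartAngle_eq_sum ⟨k, rfl⟩
  rw [hangle, map_sum, ← hn]
  simp only [hφ]
  exact G.sum_dual_dartBoundary_iterate_next e n

/-- For consecutive outgoing darts `e₀, …, e_k` at a vertex `u`
of a planar ribbon graph, with `rᵢ` the face to the right of `eᵢ`,
`φ(∠ᵘ(e₀, e_k)) = [r₀ - r_k] ∈ Jac(G*)`. -/
theorem dual_of_dart_angle (G : RibbonGraph)
    (hconn : G.Connected) (hloop : G.Loopless) (hplanar : G.IsPlanar)
    (hdualloop : G.dual.Loopless)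
    (φ : G.Jac ≃+ G.dual.Jac)
    (hφ : ∀ d : G.D, φ (G.dartBoundary d) = G.dual.dartBoundary d)
    (u : G.V) (k : ℕ) (e : G.D) (he : G.tail e = u) :
    φ (G.dartAngle e ((⇑G.next)^[k] e)) =
      G.dual.unitClass (G.rightFace e) (G.rightFace ((⇑G.next)^[k] e)) :=
  dual_of_dart_angle_general G φ hφ k e
end

section
/- Let G be a planar ribbon graph, let v be a vertex, and let T and T' be spanning trees of G. Then ∠_v(T, T') = 0 in Jac(G) if and only if T = T'. -/
attribute [local instance 10] Classical.propDecidable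

/-!
Let `ρ, ρ'` be the rotor configurations of `T, T'` based at `v`. The angle `∠_v(T, T')` is the
class of `∂X`, where `X ∈ ℤE` is the sum of the darts swept when every rotor of `ρ` is turned
into the corresponding rotor of `ρ'`. If the angle vanishes then `∂X = ∂(∇c)` for a potential `c`,
so `X - ∇c` is a circulation. Pairing it with the gradient of a superlevel indicator of `c`, and
using `X ≤ 1`, shows that every dart along which `c` strictly decreases is swept. Rotors are never
swept, so following them from any vertex never decreases `c`: the root maximizes `c`.

Turning `ρ'` back into `ρ` sweeps, at each vertex `u ∈ S` where the rotors differ, exactly the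
darts at `u` not swept before, so the reverse sweep vector is `∇1_S - X` and the same argument
makes the root maximize `1_S - c`. Hence the maxima of `c` lie outside `S`, no dart descends from
a maximum, and by connectivity `c` is constant and `S = ∅`. A spanning tree is recovered from its
rotor configuration, so `T = T'`.
-/

open Finset

namespace Multigraph

variable {G : Multigraph}

lemma head_rev (d : G.D) : G.head (G.rev d) = G.tail d := rfl

lemma tail_rev (d : G.D) : G.tail (G.rev d) = G.head d :=
  congrArg G.head (G.rev_invol d)

lemma sum_comp_rev {M : Type*} [AddCommMonoid M] (f : G.D → M) :
    ∑ d, f (G.rev d) = ∑ d, f d :=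
  Equiv.sum_comp G.revPerm f

lemma bMap_apply (x : G.D → ℤ) (w : G.V) :
    G.bMap x w = ∑ d with G.head d = w, x d := rfl

variable (G) in
def gradient : (G.V → ℤ) →+ (G.D → ℤ) :=
  AddMonoidHom.mk' (fun c d => c (G.tail d) - c (G.head d))
    (fun a b => by ext d; simp only [Pi.add_apply]; ring)

lemma gradient_apply (c : G.V → ℤ) (d : G.D) :
    G.gradient c d = c (G.tail d) - c (G.head d) := rfl

lemma gradient_mem_edgeGroup (c : G.V → ℤ) : G.gradient c ∈ G.EdgeGroup := by
  intro d
  simp only [gradient_apply, tail_rev, head_rev, neg_sub]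

lemma bMap_gradient_single (hloop : G.Loopless) (u : G.V) :
    G.bMap (G.gradient (Pi.single u 1)) = G.prin u := by
  ext w
  rw [bMap_apply, prin]
  split_ifs with hwu
  · subst hwu
    have hsum : ∑ d with G.head d = w, G.gradient (Pi.single w 1) d
        = ∑ d with G.head d = w, (-1 : ℤ) := by
      refine sum_congr rfl fun d hd => ?_
      have hd : G.head d = w := (mem_filter.1 hd).2
      have ht : G.tail d ≠ w := hd ▸ (hloop d).symm
      simp [gradient_apply, hd, ht]
    rw [hsum, sum_const, degree, smul_neg, nsmul_one, neg_inj, Nat.cast_inj]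
    exact card_equiv G.revPerm (fun d => by simp [revPerm, tail_rev])
  · rw [mul, card_filter, Nat.cast_sum, sum_filter]
    refine sum_congr rfl fun d _ => ?_
    by_cases hd : G.head d = w
    · simp [gradient_apply, hd, Pi.single_apply, hwu, and_comm]
    · simp [hd]

lemma exists_gradient_of_mem_prin (hloop : G.Loopless) {x : G.V → ℤ} (hx : x ∈ G.Prin) :
    ∃ c, G.bMap (G.gradient c) = x := by
  have hle : G.Prin ≤ (G.bMap.comp G.gradient).range := by
    rw [Prin, AddSubgroup.closure_le]
    rintro _ ⟨u, rfl⟩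
    exact ⟨Pi.single u 1, bMap_gradient_single hloop u⟩
  exact hle hx

lemma dartVec_eq (e : G.D) : G.dartVec e = Pi.single e 1 - Pi.single (G.rev e) 1 := by
  ext d
  rcases eq_or_ne d e with rfl | hde
  · simp [dartVec, (G.rev_ne d).symm]
  · simp only [dartVec, Pi.single_apply, hde, if_false, Pi.sub_apply]
    split_ifs <;> simp

lemma bMap_dartVec (e : G.D) : G.bMap (G.dartVec e) = G.unitDivFun (G.head e) (G.tail e) := by
  ext w
  simp [bMap_apply, dartVec_eq, sum_sub_distrib, unitDivFun, Pi.single_apply, head_rev, eq_comm]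

lemma sum_dartVec_apply (s : Finset G.D) (d : G.D) :
    (∑ e ∈ s, G.dartVec e) d = (if d ∈ s then 1 else 0) - (if G.rev d ∈ s then 1 else 0) := by
  have hrev : ∀ e, d = G.rev e ↔ e = G.rev d := fun e => by rw [eq_comm, G.rev_invol.eq_iff]
  simp [dartVec_eq, Finset.sum_apply, sum_sub_distrib, Pi.single_apply, hrev]

lemma sum_dartVec_filter_tail (p : G.V → Prop) :
    ∑ e with p (G.tail e), G.dartVec e = G.gradient (fun u => if p u then 1 else 0) := by
  ext d
  rw [sum_dartVec_apply]
  simp [gradient_apply, tail_rev]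

lemma sum_dartBoundary_eq_zero_iff (s : Finset G.D) :
    ∑ e ∈ s, G.dartBoundary e = 0 ↔ G.bMap (∑ e ∈ s, G.dartVec e) ∈ G.Prin := by
  let π : G.Div0 →+ G.Jac := QuotientAddGroup.mk' _
  have hsum : ∑ e ∈ s, G.dartBoundary e = π (∑ e ∈ s, G.unitDiv (G.head e) (G.tail e)) := by
    rw [map_sum]; rfl
  have hcoe : ((∑ e ∈ s, G.unitDiv (G.head e) (G.tail e) : G.Div0) : G.V → ℤ)
      = G.bMap (∑ e ∈ s, G.dartVec e) := by
    simp only [AddSubgroup.val_finsetSum, map_sum, bMap_dartVec, unitDiv]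
  rw [hsum, ← hcoe]
  exact (QuotientAddGroup.eq_zero_iff _).trans AddSubgroup.mem_addSubgroupOf

lemma sum_gradient_mul_eq_zero {Z : G.D → ℤ} (hZ : Z ∈ G.EdgeGroup) (h0 : G.bMap Z = 0)
    (f : G.V → ℤ) : ∑ d, G.gradient f d * Z d = 0 := by
  have hhead : ∑ d, f (G.head d) * Z d = 0 := by
    rw [← sum_fiberwise univ G.head]
    refine sum_eq_zero fun w _ => ?_
    calc ∑ d with G.head d = w, f (G.head d) * Z d = f w * G.bMap Z w := by
          rw [bMap_apply, mul_sum]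
          exact sum_congr rfl fun d hd => by rw [(mem_filter.1 hd).2]
      _ = 0 := by rw [h0, Pi.zero_apply, mul_zero]
  have htail : ∑ d, f (G.tail d) * Z d = 0 := by
    rw [← sum_comp_rev]
    simp only [tail_rev, hZ _, mul_neg, sum_neg_distrib, hhead, neg_zero]
  simp only [gradient_apply, sub_mul, sum_sub_distrib, hhead, htail, sub_zero]

lemma eq_one_of_bMap_eq_bMap_gradient {X : G.D → ℤ} {c : G.V → ℤ} (hX : X ∈ G.EdgeGroup)
    (hX1 : ∀ d, X d ≤ 1) (hXc : G.bMap X = G.bMap (G.gradient c)) {e : G.D}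
    (he : c (G.head e) < c (G.tail e)) : X e = 1 := by
  let f : G.V → ℤ := fun u => if c (G.tail e) ≤ c u then 1 else 0
  have hZ : X - G.gradient c ∈ G.EdgeGroup := sub_mem hX (gradient_mem_edgeGroup c)
  have h0 : G.bMap (X - G.gradient c) = 0 := by rw [map_sub, hXc, sub_self]
  -- `X ≤ 1` on the darts leaving the superlevel set `{f = 1}`, and `X ≥ -1` (by antisymmetry)
  -- on the darts entering it.
  have hterm : ∀ d, G.gradient f d * (X - G.gradient c) d ≤ 0 := by
    intro d
    have h1 := hX1 d
    have h2 := hX1 (G.rev d)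
    rw [hX d] at h2
    simp only [f, gradient_apply, Pi.sub_apply]
    split_ifs <;> nlinarith
  have hsum := (sum_eq_zero_iff_of_nonpos fun d _ => hterm d).1
    (sum_gradient_mul_eq_zero hZ h0 f) e (mem_univ e)
  have hfe : G.gradient f e = 1 := by
    simp only [f, gradient_apply, le_refl, if_true, not_le.2 he, if_false, sub_zero]
  rw [hfe, one_mul, Pi.sub_apply, gradient_apply, sub_eq_zero] at hsum
  have := hX1 e
  omega

lemma mem_of_bMap_sum_dartVec_eq_bMap_gradient {s : Finset G.D} {c : G.V → ℤ}
    (hs : G.bMap (∑ e ∈ s, G.dartVec e) = G.bMap (G.gradient c)) {e : G.D}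
    (he : c (G.head e) < c (G.tail e)) : e ∈ s := by
  have hX1 : ∀ d, (∑ e ∈ s, G.dartVec e) d ≤ 1 := fun d => by
    rw [sum_dartVec_apply]; split_ifs <;> omega
  have h := eq_one_of_bMap_eq_bMap_gradient (sum_mem fun e _ => G.dartVec_mem e) hX1 hs he
  rw [sum_dartVec_apply] at h
  by_contra hes
  rw [if_neg hes] at h
  split_ifs at h <;> omega

end Multigraph

namespace RibbonGraph

open Function Multigraph

variable {G : RibbonGraph} {d d' e : G.D} {k : ℕ}

lemma tail_iterate_next (d : G.D) (k : ℕ) : G.tail ((⇑G.next)^[k] d) = G.tail d := by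
  induction k with
  | zero => rfl
  | succ k ih => rw [iterate_succ_apply', G.next_tail, ih]

lemma minimalPeriod_next_pos (d : G.D) : 0 < minimalPeriod G.next d :=
  minimalPeriod_pos_of_mem_periodicPts (G.next.injective.mem_periodicPts d)

lemma injOn_iterate_succ_next (d : G.D) :
    Set.InjOn (fun i => (⇑G.next)^[i + 1] d) (Set.Iio (minimalPeriod G.next d)) :=
  fun i hi j hj hij => iterate_injOn_Iio_minimalPeriod hi hj <| G.next.injective <| by
    simpa only [iterate_succ_apply'] using hij

lemma exists_iterate_next_eq (h : G.tail d = G.tail d') :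
    ∃ k < minimalPeriod G.next d, (⇑G.next)^[k] d = d' := by
  obtain ⟨i, hi⟩ := (G.next_cyclic d d' h).exists_nat_pow_eq
  exact ⟨i % minimalPeriod G.next d, Nat.mod_lt _ (minimalPeriod_next_pos d),
    by rw [iterate_mod_minimalPeriod_eq, Equiv.Perm.iterate_eq_pow, hi]⟩

lemma filter_tail_eq_image (d : G.D) :
    ({e | G.tail e = G.tail d} : Finset G.D)
      = (range (minimalPeriod G.next d)).image fun i => (⇑G.next)^[i + 1] d := by
  ext e
  simp only [mem_filter, mem_univ, true_and, mem_image, mem_range]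
  constructor
  · intro h
    obtain ⟨k, hk, rfl⟩ := exists_iterate_next_eq h.symm
    rcases k with _ | k
    · refine ⟨minimalPeriod G.next d - 1, by omega, ?_⟩
      rw [Nat.sub_add_cancel (minimalPeriod_next_pos d), iterate_minimalPeriod, iterate_zero_apply]
    · exact ⟨k, by omega, rfl⟩
  · rintro ⟨i, -, rfl⟩
    exact tail_iterate_next d (i + 1)

variable (G) in
noncomputable def turns (d d' : G.D) : ℕ :=
  if h : ∃ k, (⇑G.next)^[k] d = d' then Nat.find h else 0

variable (G) in
noncomputable def sweep (d d' : G.D) : Finset G.D :=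
  (range (G.turns d d')).image fun i => (⇑G.next)^[i + 1] d

lemma iterate_turns (h : G.tail d = G.tail d') : (⇑G.next)^[G.turns d d'] d = d' := by
  have hex : ∃ k, (⇑G.next)^[k] d = d' := (exists_iterate_next_eq h).imp fun _ => And.right
  rw [turns, dif_pos hex]
  exact Nat.find_spec hex

lemma turns_le (h : (⇑G.next)^[k] d = d') : G.turns d d' ≤ k := by
  rw [turns, dif_pos ⟨k, h⟩]
  exact Nat.find_min' _ h

lemma turns_lt_minimalPeriod (d d' : G.D) : G.turns d d' < minimalPeriod G.next d := by
  by_cases hex : ∃ k, (⇑G.next)^[k] d = d'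
  · obtain ⟨k, hk⟩ := hex
    exact (turns_le (iterate_mod_minimalPeriod_eq.trans hk)).trans_lt
      (Nat.mod_lt _ (minimalPeriod_next_pos d))
  · rw [turns, dif_neg hex]
    exact minimalPeriod_next_pos d

lemma turns_swap (h : G.tail d = G.tail d') (hne : d ≠ d') :
    G.turns d' d = minimalPeriod G.next d - G.turns d d' := by
  have hn := iterate_turns h
  have hpos : 0 < G.turns d d' := Nat.pos_of_ne_zero fun h0 => hne (by rw [← hn, h0]; rfl)
  have hlt := turns_lt_minimalPeriod d d'
  have hshift : ∀ k, (⇑G.next)^[k] d' = (⇑G.next)^[k + G.turns d d'] d := fun k => by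
    rw [iterate_add_apply, hn]
  refine le_antisymm (turns_le ?_) (Nat.le_of_not_lt fun hk => ?_)
  · rw [hshift, Nat.sub_add_cancel hlt.le, iterate_minimalPeriod]
  · have hd := iterate_turns h.symm
    rw [hshift] at hd
    have := iterate_injOn_Iio_minimalPeriod (Set.mem_Iio.2 (by omega)) (minimalPeriod_next_pos d) hd
    omega

lemma sweep_self (d : G.D) : G.sweep d d = ∅ := by
  rw [sweep, Nat.le_zero.1 (turns_le (d' := d) (iterate_zero_apply _ d)), range_zero, image_empty]

lemma tail_of_mem_sweep (he : e ∈ G.sweep d d') : G.tail e = G.tail d := by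
  obtain ⟨i, -, rfl⟩ := mem_image.1 he
  exact tail_iterate_next d (i + 1)

lemma notMem_sweep (d d' : G.D) : d ∉ G.sweep d d' := by
  rw [sweep, mem_image]
  rintro ⟨i, hi, hid⟩
  have hlt : i + 1 < minimalPeriod G.next d :=
    (Nat.succ_le_of_lt (mem_range.1 hi)).trans_lt (turns_lt_minimalPeriod d d')
  exact i.succ_ne_zero <| iterate_injOn_Iio_minimalPeriod hlt (minimalPeriod_next_pos d) hid

lemma dartAngle_eq_sum_sweep (d d' : G.D) :
    G.dartAngle d d' = ∑ e ∈ G.sweep d d', G.dartBoundary e := by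
  rw [sweep, sum_image fun i hi j hj => injOn_iterate_succ_next d
    ((mem_range.1 hi).trans (turns_lt_minimalPeriod d d'))
    ((mem_range.1 hj).trans (turns_lt_minimalPeriod d d'))]
  rw [dartAngle, turns]
  split_ifs <;> rfl

lemma sweep_swap (h : G.tail d = G.tail d') (hne : d ≠ d') :
    G.sweep d' d = (Ico (G.turns d d') (minimalPeriod G.next d)).image
      fun i => (⇑G.next)^[i + 1] d := by
  have hIco : Ico (G.turns d d') (minimalPeriod G.next d)
      = (range (minimalPeriod G.next d - G.turns d d')).image (· + G.turns d d') := by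
    rw [range_eq_Ico, image_add_right_Ico, zero_add,
      Nat.sub_add_cancel (turns_lt_minimalPeriod d d').le]
  rw [sweep, turns_swap h hne, hIco, image_image]
  refine image_congr fun i _ => ?_
  show (⇑G.next)^[i + 1] d' = (⇑G.next)^[i + G.turns d d' + 1] d
  conv_lhs => rw [← iterate_turns h, ← iterate_add_apply]
  rw [Nat.add_right_comm]

lemma disjoint_sweep_swap (h : G.tail d = G.tail d') (hne : d ≠ d') :
    Disjoint (G.sweep d d') (G.sweep d' d) := by
  rw [sweep_swap h hne, sweep, disjoint_left]
  rintro _ h₁ h₂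
  obtain ⟨i, hi, rfl⟩ := mem_image.1 h₁
  obtain ⟨j, hj, hji⟩ := mem_image.1 h₂
  rw [mem_range] at hi
  rw [mem_Ico] at hj
  have := injOn_iterate_succ_next d hj.2 (hi.trans (turns_lt_minimalPeriod d d')) hji
  omega

lemma sweep_union_sweep_swap (h : G.tail d = G.tail d') (hne : d ≠ d') :
    G.sweep d d' ∪ G.sweep d' d = ({e | G.tail e = G.tail d} : Finset G.D) := by
  rw [sweep_swap h hne, sweep, ← image_union, range_eq_Ico,
    Ico_union_Ico_eq_Ico (Nat.zero_le _) (turns_lt_minimalPeriod d d').le, ← range_eq_Ico,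
    filter_tail_eq_image]

section Rotors

variable {v : G.V} {T T' : Finset G.D} {ρ ρ' π : G.RotorConfig v}

lemma RotorConfig.ext_iff : ρ = π ↔ ∀ u (hu : u ≠ v), ρ.1 u hu = π.1 u hu :=
  ⟨fun h _ _ => h ▸ rfl, fun h => Subtype.ext (funext fun u => funext (h u))⟩

lemma TowardRoot.root_of_closed (hρ : G.TowardRoot v T ρ) {P : G.V → Prop}
    (hP : ∀ u (hu : u ≠ v), P u → P (G.head (ρ.1 u hu))) {u : G.V} (hu : P u) : P v := by
  by_cases huv : u = v
  · exact huv ▸ hu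
  · have key : ∀ w, Relation.ReflTransGen
        (fun a b => ∃ ha : a ≠ v, G.head (ρ.1 a ha) = b) u w → P w := by
      intro w hw
      induction hw with
      | refl => exact hu
      | tail _ hstep ih =>
        obtain ⟨hb, rfl⟩ := hstep
        exact hP _ hb ih
    exact key v (hρ u huv).2

lemma TowardRoot.rev_ne (hρ : G.TowardRoot v T ρ) {u w : G.V} (hu : u ≠ v) (hw : w ≠ v) :
    ρ.1 w hw ≠ G.rev (ρ.1 u hu) := by
  intro h
  have huw : G.head (ρ.1 u hu) = w := by rw [← tail_rev, ← h, ρ.2]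
  have hwu : G.head (ρ.1 w hw) = u := by rw [h, head_rev, ρ.2]
  have hclosed : ∀ x (hx : x ≠ v), (x = u ∨ x = w) →
      G.head (ρ.1 x hx) = u ∨ G.head (ρ.1 x hx) = w := by
    rintro x hx (rfl | rfl)
    · exact Or.inr huw
    · exact Or.inl hwu
  rcases hρ.root_of_closed hclosed (Or.inl rfl) with h | h
  · exact hu h.symm
  · exact hw h.symm

lemma TowardRoot.mem_iff (hρ : G.TowardRoot v T ρ) (hT : G.IsSpanningTree T) :
    d ∈ T ↔ ∃ u, ∃ hu : u ≠ v, ρ.1 u hu = d ∨ ρ.1 u hu = G.rev d := by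
  let f : {u // u ≠ v} → G.D := fun u => ρ.1 u u.2
  have hf : Injective f := fun a b hab =>
    Subtype.ext (by rw [← ρ.2 a a.2, ← ρ.2 b b.2]; exact congrArg G.tail hab)
  have hsub : univ.image f ∪ univ.image (G.rev ∘ f) ⊆ T := by
    intro d hd
    simp only [mem_union, mem_image, mem_univ, true_and, comp_apply] at hd
    rcases hd with ⟨u, rfl⟩ | ⟨u, rfl⟩
    · exact (hρ u u.2).1
    · exact hT.1 _ (hρ u u.2).1
  have hdisj : Disjoint (univ.image f) (univ.image (G.rev ∘ f)) := by
    simp only [disjoint_left, mem_image, mem_univ, true_and, comp_apply]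
    rintro _ ⟨u, rfl⟩ ⟨w, hw⟩
    exact hρ.rev_ne w.2 u.2 hw.symm
  have hcard : (univ.image f ∪ univ.image (G.rev ∘ f)).card = T.card := by
    rw [card_union_of_disjoint hdisj, card_image_of_injective _ hf,
      card_image_of_injective _ (G.rev_invol.injective.comp hf), hT.2.2]
    simp only [ne_eq, card_univ, Fintype.card_subtype_compl, Fintype.card_unique]
    omega
  rw [← eq_of_subset_of_card_le hsub hcard.ge]
  simp only [mem_union, mem_image, mem_univ, true_and, comp_apply, f,
    ← G.rev_invol.eq_iff, Subtype.exists, ← exists_or]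

lemma TowardRoot.eq_of_towardRoot (hρ : G.TowardRoot v T ρ) (hρ' : G.TowardRoot v T' ρ)
    (hT : G.IsSpanningTree T) (hT' : G.IsSpanningTree T') : T = T' :=
  ext fun _ => (hρ.mem_iff hT).trans (hρ'.mem_iff hT').symm

lemma TowardRoot.unique (hT : G.IsSpanningTree T) (hρ : G.TowardRoot v T ρ)
    (hπ : G.TowardRoot v T π) : ρ = π := by
  rw [RotorConfig.ext_iff]
  by_contra! ⟨u, hu, hne⟩
  -- Where the configurations disagree, `π` runs against a rotor of `ρ`, to a vertex where they
  -- disagree again (`rev_ne`); so the disagreement set is closed under `π` and contains `v`.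
  have hclosed : ∀ x (hx : x ≠ v), (∃ hx : x ≠ v, ρ.1 x hx ≠ π.1 x hx) →
      ∃ hy : G.head (π.1 x hx) ≠ v, ρ.1 _ hy ≠ π.1 _ hy := by
    rintro x hx ⟨_, hρπ⟩
    obtain ⟨w, hw, hwx | hwx⟩ := (hρ.mem_iff hT).1 (hπ x hx).1
    · have hwx' : w = x := by rw [← ρ.2 w hw, hwx, π.2]
      subst hwx'
      exact absurd hwx hρπ
    · have hw' : G.head (π.1 x hx) = w := by rw [← tail_rev, ← hwx, ρ.2]
      subst hw'
      exact ⟨hw, fun h => hπ.rev_ne hx hw (h ▸ hwx)⟩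
  obtain ⟨hv, -⟩ := hπ.root_of_closed hclosed ⟨hu, hne⟩
  exact hv rfl

lemma exists_towardRoot (hrev : ∀ d ∈ T, G.rev d ∈ T)
    (hreach : ∀ u, Relation.ReflTransGen (G.treeAdj T) u v) :
    ∃ ρ : G.RotorConfig v, G.TowardRoot v T ρ := by
  let H : SimpleGraph G.V := SimpleGraph.fromRel (G.treeAdj T)
  have hH : ∀ u, H.Reachable u v := fun u => by
    rw [SimpleGraph.reachable_iff_reflTransGen]
    refine Relation.reflTransGen_closed (fun a b hab => ?_) u v (hreach u)
    by_cases hab' : a = b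
    · exact hab' ▸ Relation.ReflTransGen.refl
    · exact Relation.ReflTransGen.single ⟨hab', Or.inl hab⟩
  have hstep : ∀ u, u ≠ v → ∃ d ∈ T, G.tail d = u ∧ H.dist (G.head d) v < H.dist u v := by
    intro u hu
    obtain ⟨p, hp⟩ := (hH u).exists_walk_length_eq_dist
    cases p with
    | nil => exact absurd rfl hu
    | @cons _ w _ hadj q =>
      have hq : H.dist w v < H.dist u v := by
        have := H.dist_le q
        rw [← hp, SimpleGraph.Walk.length_cons]
        omega
      obtain ⟨-, ⟨d, hd, rfl, rfl⟩ | ⟨d, hd, rfl, rfl⟩⟩ := hadj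
      · exact ⟨d, hd, rfl, hq⟩
      · exact ⟨G.rev d, hrev d hd, tail_rev d, hq⟩
  choose r hrT hrt hrd using hstep
  refine ⟨⟨r, hrt⟩, fun u hu => ⟨hrT u hu, ?_⟩⟩
  induction hdist : H.dist u v using Nat.strong_induction_on generalizing u with
  | _ n ih =>
    by_cases hhead : G.head (r u hu) = v
    · exact Relation.ReflTransGen.single ⟨hu, hhead⟩
    · exact Relation.ReflTransGen.head ⟨hu, rfl⟩ (ih _ (hdist ▸ hrd u hu) _ hhead rfl)

variable (G) in
noncomputable def sweptSet (ρ ρ' : G.RotorConfig v) : Finset G.D :=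
  {e | ∃ h : G.tail e ≠ v, e ∈ G.sweep (ρ.1 _ h) (ρ'.1 _ h)}

lemma mem_sweptSet_iff {u : G.V} (hu : u ≠ v) (he : G.tail e = u) :
    e ∈ G.sweptSet ρ ρ' ↔ e ∈ G.sweep (ρ.1 u hu) (ρ'.1 u hu) := by
  subst he
  simp [sweptSet, hu]

lemma rotor_notMem_sweptSet {u : G.V} (hu : u ≠ v) : ρ.1 u hu ∉ G.sweptSet ρ ρ' := by
  rw [mem_sweptSet_iff hu (ρ.2 u hu)]
  exact notMem_sweep _ _

lemma sweptSet_self (ρ : G.RotorConfig v) : G.sweptSet ρ ρ = ∅ := by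
  simp [sweptSet, sweep_self]

lemma sum_sweptSet {M : Type*} [AddCommMonoid M] (f : G.D → M) :
    ∑ e ∈ G.sweptSet ρ ρ', f e
      = ∑ u, if hu : u = v then 0 else ∑ e ∈ G.sweep (ρ.1 u hu) (ρ'.1 u hu), f e := by
  rw [← sum_fiberwise (G.sweptSet ρ ρ') G.tail]
  refine sum_congr rfl fun u _ => ?_
  split_ifs with hu
  · refine sum_eq_zero fun e he => ?_
    obtain ⟨hes, rfl⟩ := mem_filter.1 he
    obtain ⟨hne, -⟩ := (mem_filter.1 hes).2
    exact absurd hu hne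
  · refine sum_congr (ext fun e => ?_) fun _ _ => rfl
    rw [mem_filter]
    constructor
    · rintro ⟨he, rfl⟩
      exact (mem_sweptSet_iff hu rfl).1 he
    · intro he
      have htail : G.tail e = u := (tail_of_mem_sweep he).trans (ρ.2 u hu)
      exact ⟨(mem_sweptSet_iff hu htail).2 he, htail⟩

lemma treeAngle_eq_sum_sweptSet (hT : G.IsSpanningTree T) (hT' : G.IsSpanningTree T')
    (hρ : G.TowardRoot v T ρ) (hρ' : G.TowardRoot v T' ρ') :
    G.treeAngle v T T' = ∑ e ∈ G.sweptSet ρ ρ', G.dartBoundary e := by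
  have hex : ∃ p : G.RotorConfig v × G.RotorConfig v,
      G.TowardRoot v T p.1 ∧ G.TowardRoot v T' p.2 := ⟨(ρ, ρ'), hρ, hρ'⟩
  rw [treeAngle, dif_pos hex, sum_sweptSet, hex.choose_spec.1.unique hT hρ,
    hex.choose_spec.2.unique hT' hρ']
  simp only [dartAngle_eq_sum_sweep]

lemma disjoint_sweptSet_swap : Disjoint (G.sweptSet ρ ρ') (G.sweptSet ρ' ρ) := by
  rw [disjoint_left]
  intro e h₁ h₂
  obtain ⟨hu, h₁⟩ := (mem_filter.1 h₁).2
  obtain ⟨hu', h₂⟩ := (mem_filter.1 h₂).2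
  by_cases heq : ρ.1 _ hu = ρ'.1 _ hu
  · rw [heq, sweep_self] at h₁
    exact notMem_empty _ h₁
  · exact disjoint_left.1 (disjoint_sweep_swap (by rw [ρ.2, ρ'.2]) heq) h₁ h₂

lemma sweptSet_union_swap :
    G.sweptSet ρ ρ' ∪ G.sweptSet ρ' ρ
      = ({e | ∃ h : G.tail e ≠ v, ρ.1 _ h ≠ ρ'.1 _ h} : Finset G.D) := by
  ext e
  simp only [sweptSet, mem_union, mem_filter, mem_univ, true_and]
  constructor
  · rintro (⟨hu, he⟩ | ⟨hu, he⟩) <;> refine ⟨hu, fun heq => ?_⟩ <;>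
      simp [heq, sweep_self] at he
  · rintro ⟨hu, hne⟩
    have he : e ∈ ({e' | G.tail e' = G.tail (ρ.1 _ hu)} : Finset G.D) := by simp [ρ.2]
    rw [← sweep_union_sweep_swap (by rw [ρ.2, ρ'.2]) hne, mem_union] at he
    exact he.imp (⟨hu, ·⟩) (⟨hu, ·⟩)

lemma sum_dartVec_sweptSet_add_swap :
    ∑ e ∈ G.sweptSet ρ ρ', G.dartVec e + ∑ e ∈ G.sweptSet ρ' ρ, G.dartVec e
      = G.gradient fun u => if ∃ hu : u ≠ v, ρ.1 u hu ≠ ρ'.1 u hu then 1 else 0 := by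
  rw [← sum_union disjoint_sweptSet_swap, sweptSet_union_swap]
  convert sum_dartVec_filter_tail fun u => ∃ hu : u ≠ v, ρ.1 u hu ≠ ρ'.1 u hu

lemma TowardRoot.le_root (hρ : G.TowardRoot v T ρ) {f : G.V → ℤ}
    (hf : ∀ e, f (G.head e) < f (G.tail e) → e ∈ G.sweptSet ρ ρ') (u : G.V) : f u ≤ f v := by
  refine hρ.root_of_closed (P := fun w => f u ≤ f w) (fun w hw hle => hle.trans ?_) le_rfl
  by_contra! hlt
  exact rotor_notMem_sweptSet hw (hf _ (by rwa [ρ.2]))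

lemma TowardRoot.eq_of_sum_sweptSet_eq_zero (hconn : G.Connected) (hloop : G.Loopless)
    (hρ : G.TowardRoot v T ρ) (hρ' : G.TowardRoot v T' ρ')
    (h : ∑ e ∈ G.sweptSet ρ ρ', G.dartBoundary e = 0) : ρ = ρ' := by
  set S : G.V → ℤ := fun u => if ∃ hu : u ≠ v, ρ.1 u hu ≠ ρ'.1 u hu then 1 else 0 with hS
  obtain ⟨c, hc⟩ := exists_gradient_of_mem_prin hloop ((sum_dartBoundary_eq_zero_iff _).1 h)
  have hc' : G.bMap (∑ e ∈ G.sweptSet ρ' ρ, G.dartVec e) = G.bMap (G.gradient (S - c)) := by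
    rw [map_sub, map_sub, hc, ← sum_dartVec_sweptSet_add_swap, map_add, add_sub_cancel_left]
  have hmax : ∀ u, c u ≤ c v :=
    hρ.le_root fun _ he => mem_of_bMap_sum_dartVec_eq_bMap_gradient hc.symm he
  have hmax' : ∀ u, (S - c) u ≤ (S - c) v :=
    hρ'.le_root fun _ he => mem_of_bMap_sum_dartVec_eq_bMap_gradient hc' he
  have hSv : S v = 0 := if_neg fun ⟨hv, _⟩ => hv rfl
  have hflat : ∀ u, c u = c v → S u = 0 := by
    intro u hu
    have := hmax' u
    simp only [Pi.sub_apply, hSv, hu] at this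
    have : 0 ≤ S u := by simp only [hS]; split_ifs <;> norm_num
    omega
  have hconst : ∀ w, c w = c v := by
    intro w
    induction hconn v w with
    | refl => rfl
    | tail _ hadj ih =>
      obtain ⟨d, rfl, rfl⟩ := hadj
      refine le_antisymm (hmax _) (not_lt.1 fun hlt => ?_)
      have hd := mem_of_bMap_sum_dartVec_eq_bMap_gradient hc.symm (ih.symm ▸ hlt)
      have hd' := sweptSet_union_swap ▸ mem_union_left _ hd
      have := hflat _ ih
      simp only [mem_filter, mem_univ, true_and] at hd'
      simp [hS, hd'] at this
  rw [RotorConfig.ext_iff]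
  intro u hu
  by_contra hne
  have := hflat u (hconst u)
  simp [hS, hu, hne] at this

end Rotors

end RibbonGraph

theorem angle_eq_zero_iff_eq_general (G : RibbonGraph)
    (hconn : G.Connected) (hloop : G.Loopless)
    (v : G.V) (T T' : Finset G.D)
    (hT : G.IsSpanningTree T) (hT' : G.IsSpanningTree T') :
    G.treeAngle v T T' = 0 ↔ T = T' := by
  obtain ⟨ρ, hρ⟩ := RibbonGraph.exists_towardRoot hT.1 fun u => hT.2.1 u v
  obtain ⟨ρ', hρ'⟩ := RibbonGraph.exists_towardRoot hT'.1 fun u => hT'.2.1 u v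
  rw [RibbonGraph.treeAngle_eq_sum_sweptSet hT hT' hρ hρ']
  constructor
  · intro h
    obtain rfl := hρ.eq_of_sum_sweptSet_eq_zero hconn hloop hρ' h
    exact hρ.eq_of_towardRoot hρ' hT hT'
  · rintro rfl
    rw [hρ.unique hT hρ', RibbonGraph.sweptSet_self, sum_empty]

/-- For a planar ribbon graph `G` and spanning trees `T`, `T'`
rooted at a common vertex `v`, the angle `∠_v(T, T')` vanishes iff `T = T'`. -/
theorem angle_eq_zero_iff_eq (G : RibbonGraph)
    (hconn : G.Connected) (hloop : G.Loopless) (hplanar : G.IsPlanar)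
    (v : G.V) (T T' : Finset G.D)
    (hT : G.IsSpanningTree T) (hT' : G.IsSpanningTree T') :
    G.treeAngle v T T' = 0 ↔ T = T' :=
  angle_eq_zero_iff_eq_general G hconn hloop v T T' hT hT'
end

section
/- Let G be a finite connected loopless multigraph and let q be a vertex of G. Then every divisor D on G is linearly equivalent to a divisor D' satisfying D'(v) ≥ 0 for all vertices v ≠ q. -/
attribute [local instance 10] Classical.propDecidable

/-! Walking from `q` to `v` along a path and lending at each vertex passed (after
enough copies of what was built so far to keep that vertex solvent) gives a principal
divisor that is nonnegative away from `q` and positive at `v`. Summing these over all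
`v ≠ q` gives one that is positive everywhere away from `q`, and adding a large multiple
of it to `D` removes all debt away from `q`. -/

section NonnegAway

variable {ι : Type*} [Fintype ι] (H : AddSubgroup (ι → ℤ)) (p : ι → Prop)

theorem AddSubgroup.exists_mem_forall_one_le
    (h : ∀ v, p v → ∃ P ∈ H, 1 ≤ P v ∧ ∀ w, p w → 0 ≤ P w) :
    ∃ Q ∈ H, ∀ w, p w → 1 ≤ Q w := by
  choose P hPH hPv hPnn using h
  refine ⟨∑ v : {v // p v}, P v v.2, H.sum_mem fun v _ => hPH v v.2, fun w hw => ?_⟩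
  rw [Finset.sum_apply]
  calc (1 : ℤ) ≤ P w hw w := hPv w hw
    _ ≤ ∑ v : {v // p v}, P v v.2 w :=
      Finset.single_le_sum (f := fun v : {v // p v} => P v v.2 w)
        (fun v _ => hPnn v v.2 w hw) (Finset.mem_univ ⟨w, hw⟩)

theorem AddSubgroup.exists_mem_forall_nonneg_add {Q : ι → ℤ} (hQH : Q ∈ H)
    (hQ : ∀ w, p w → 1 ≤ Q w) (D : ι → ℤ) :
    ∃ P ∈ H, ∀ w, p w → 0 ≤ D w + P w := by
  set N : ℤ := ∑ w, |D w|
  have hN : ∀ w, -D w ≤ N := fun w =>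
    (neg_le_abs (D w)).trans
      (Finset.single_le_sum (fun w _ => abs_nonneg (D w)) (Finset.mem_univ w))
  refine ⟨N • Q, H.zsmul_mem hQH N, fun w hw => ?_⟩
  have hNQ : N ≤ N * Q w :=
    le_mul_of_one_le_right (Finset.sum_nonneg fun w _ => abs_nonneg (D w)) (hQ w hw)
  simp only [Pi.smul_apply, smul_eq_mul]
  linarith [hN w]

end NonnegAway

namespace Multigraph

variable (G : Multigraph)

theorem prin_self (v : G.V) : G.prin v v = -(G.degree v : ℤ) := by
  simp [prin]

theorem prin_of_ne {v w : G.V} (h : w ≠ v) : G.prin v w = G.mul v w := by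
  simp [prin, h]

theorem prin_mem_Prin (v : G.V) : G.prin v ∈ G.Prin :=
  AddSubgroup.subset_closure ⟨v, rfl⟩

theorem one_le_mul_of_adj {u v : G.V} (h : G.Adj u v) : 1 ≤ G.mul u v := by
  obtain ⟨d, hdu, hdv⟩ := h
  exact Finset.card_pos.mpr ⟨d, by simp [hdu, hdv]⟩

theorem exists_prin_one_le_of_adj {q b c : G.V} {P : G.V → ℤ} (hP : P ∈ G.Prin)
    (hPb : 1 ≤ P b) (hPnn : ∀ w, w ≠ q → 0 ≤ P w) (hbc : G.Adj b c) (hc : c ≠ q) :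
    ∃ P' ∈ G.Prin, 1 ≤ P' c ∧ ∀ w, w ≠ q → 0 ≤ P' w := by
  set P' := ((G.degree b : ℤ) + 1) • P + G.prin b
  have hP' : P' ∈ G.Prin := G.Prin.add_mem (G.Prin.zsmul_mem hP _) (G.prin_mem_Prin b)
  have hself : 1 ≤ P' b := by
    simp only [P', Pi.add_apply, Pi.smul_apply, smul_eq_mul, prin_self]
    nlinarith
  have hother : ∀ w, w ≠ b → 0 ≤ P w → (G.mul b w : ℤ) ≤ P' w := fun w hwb hw => by
    simp only [P', Pi.add_apply, Pi.smul_apply, smul_eq_mul, G.prin_of_ne hwb]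
    nlinarith
  refine ⟨P', hP', ?_, fun w hw => ?_⟩
  · by_cases hcb : c = b
    · exact hcb ▸ hself
    · exact le_trans (by exact_mod_cast G.one_le_mul_of_adj hbc) (hother c hcb (hPnn c hc))
  · by_cases hwb : w = b
    · exact hwb ▸ (zero_le_one.trans hself)
    · exact le_trans (by positivity) (hother w hwb (hPnn w hw))

theorem exists_prin_one_le_of_reflTransGen {q v : G.V}
    (h : Relation.ReflTransGen G.Adj q v) (hv : v ≠ q) :
    ∃ P ∈ G.Prin, 1 ≤ P v ∧ ∀ w, w ≠ q → 0 ≤ P w := by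
  induction h with
  | refl => exact absurd rfl hv
  | @tail b c _ hbc ih =>
    by_cases hb : b = q
    · subst hb
      refine ⟨G.prin b, G.prin_mem_Prin b, ?_, fun w hw => ?_⟩
      · rw [G.prin_of_ne hv]
        exact_mod_cast G.one_le_mul_of_adj hbc
      · rw [G.prin_of_ne hw]
        positivity
    · obtain ⟨P, hP, hPb, hPnn⟩ := ih hb
      exact G.exists_prin_one_le_of_adj hP hPb hPnn hbc hv

end Multigraph

theorem exists_equivalent_nonneg_away_from_base_general (G : Multigraph)
    (hconn : G.Connected)
    (q : G.V) (D : G.V → ℤ) :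
    ∃ D' : G.V → ℤ, G.LinEquiv D D' ∧ ∀ v : G.V, v ≠ q → 0 ≤ D' v := by
  obtain ⟨Q, hQ, hQpos⟩ := G.Prin.exists_mem_forall_one_le (· ≠ q) fun v hv =>
    G.exists_prin_one_le_of_reflTransGen (hconn q v) hv
  obtain ⟨P, hP, hDP⟩ := G.Prin.exists_mem_forall_nonneg_add (· ≠ q) hQ hQpos D
  exact ⟨D + P, by simpa [Multigraph.LinEquiv] using hP, hDP⟩

/-- For a finite connected loopless multigraph `G` and a vertex
`q`, every divisor is linearly equivalent to one nonnegative away from `q`. -/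
theorem exists_equivalent_nonneg_away_from_base (G : Multigraph)
    (hconn : G.Connected) (hloop : G.Loopless)
    (q : G.V) (D : G.V → ℤ) :
    ∃ D' : G.V → ℤ, G.LinEquiv D D' ∧ ∀ v : G.V, v ≠ q → 0 ≤ D' v :=
  exists_equivalent_nonneg_away_from_base_general G hconn q D
end
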